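/- Let A = [a_{ij}] be a Bott matrix of size n and let Γ(A) be the subgroup of bijections of ℝⁿ generated by the Euclidean motions s₁, …, s_n. Then the action of Γ(A) on ℝⁿ is free: every element of Γ(A) other than the identity has no fixed point in ℝⁿ. -/

import Mathlib

/-- The Euclidean motion `s_i : ℝⁿ → ℝⁿ` associated to a Bott matrix `A = [a_{ij}]`:
`(s_i x)_j = x_j` for `j < i`, `(s_i x)_i = x_i + 1/2`, and `(s_i x)_j = (-1)^{a_{ij}} x_j`
for `j > i`. -/
noncomputable def sA {n : ℕ} (A : Fin n → Fin n → ℕ) (i : Fin n) (x : Fin n → ℝ) :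
    Fin n → ℝ :=
  fun j => if j < i then x j else if j = i then x j + 1 / 2 else (-1 : ℝ) ^ (A i j) * x j

/-!
Every element of `Γ(A)` is a motion `x ↦ (ε_j x_j + m_j / 2)_j` with `m ∈ ℤⁿ`, whose signs are
forced by the translation: `ε_j = ∏_i (-1)^(a_{ij} m_i)`. These motions form a group, because
`ε` only sees `m` modulo 2. Since `A` is strictly upper triangular, `ε_j` only depends on the
`m_i` with `i < j`; so if such a motion fixes a point, induction on `j` gives `ε_j = 1` and then
`m_j = 0` for every `j`, i.e. the motion is the identity.
-/

lemma Int.negOnePow_units_mul (u : ℤˣ) (k : ℤ) : (u * k).negOnePow = k.negOnePow := by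
  rw [← Int.negOnePow_abs, abs_mul, Int.abs_eq_natAbs (u : ℤ), Int.units_natAbs, Nat.cast_one,
    one_mul, Int.negOnePow_abs]

section BottMotion

variable {n : ℕ} (A : Fin n → Fin n → ℕ)

def bottSign (m : Fin n → ℤ) (j : Fin n) : ℤˣ :=
  ∏ i, ((A i j : ℤ) * m i).negOnePow

noncomputable def bottMotion (m : Fin n → ℤ) (x : Fin n → ℝ) : Fin n → ℝ :=
  fun j => ((bottSign A m j : ℤ) : ℝ) * x j + m j / 2

lemma bottSign_add_units_mul (m m' : Fin n → ℤ) (u : Fin n → ℤˣ) (j : Fin n) :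
    bottSign A (fun i => m i + u i * m' i) j = bottSign A m j * bottSign A m' j := by
  simp only [bottSign, ← Finset.prod_mul_distrib, mul_add, Int.negOnePow_add,
    mul_left_comm _ (u _ : ℤ), Int.negOnePow_units_mul]

lemma bottMotion_zero : bottMotion A 0 = id := by
  funext x j
  simp [bottMotion, bottSign]

lemma bottMotion_bottMotion (m m' : Fin n → ℤ) (x : Fin n → ℝ) :
    bottMotion A m (bottMotion A m' x) =
      bottMotion A (fun i => m i + bottSign A m i * m' i) x := by
  funext j
  simp only [bottMotion, bottSign_add_units_mul, Units.val_mul, Int.cast_mul, Int.cast_add]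
  ring

lemma bottMotion_rightInverse (m : Fin n → ℤ) :
    Function.RightInverse (bottMotion A (fun i => -(bottSign A m i * m i))) (bottMotion A m) := by
  intro x
  have hcancel : (fun i => m i + bottSign A m i * -(bottSign A m i * m i)) = 0 := by
    funext i
    rw [mul_neg, ← mul_assoc, ← Units.val_mul, Int.units_mul_self, Units.val_one, one_mul,
      add_neg_cancel, Pi.zero_apply]
  rw [bottMotion_bottMotion, hcancel, bottMotion_zero, id]

def bottMotionSubgroup : Subgroup (Equiv.Perm (Fin n → ℝ)) where
  carrier := {σ | ∃ m, ⇑σ = bottMotion A m}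
  one_mem' := ⟨0, by rw [bottMotion_zero]; rfl⟩
  mul_mem' := by
    rintro σ τ ⟨m, hσ⟩ ⟨m', hτ⟩
    refine ⟨fun i => m i + bottSign A m i * m' i, funext fun x => ?_⟩
    rw [Equiv.Perm.coe_mul, Function.comp_apply, hσ, hτ, bottMotion_bottMotion]
  inv_mem' := by
    rintro σ ⟨m, hσ⟩
    refine ⟨fun i => -(bottSign A m i * m i), funext fun y => ?_⟩
    rw [Equiv.Perm.inv_def, Equiv.symm_apply_eq, hσ, bottMotion_rightInverse]

variable {A}

lemma bottSign_single (i j : Fin n) : bottSign A (Pi.single i 1) j = (A i j : ℤ).negOnePow := by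
  rw [bottSign, Finset.prod_eq_single i (fun k _ hk => by simp [hk]) (by simp)]
  simp

lemma sA_eq_bottMotion (hAupper : ∀ i j : Fin n, j ≤ i → A i j = 0) (i : Fin n) :
    sA A i = bottMotion A (Pi.single i 1) := by
  funext x j
  simp only [sA, bottMotion, bottSign_single, Int.cast_negOnePow_natCast]
  rcases lt_trichotomy j i with h | rfl | h
  · simp [h, h.ne, hAupper i j h.le]
  · simp [hAupper j j le_rfl]
  · simp [h.not_gt, h.ne']

lemma closure_sA_le_bottMotionSubgroup (hAupper : ∀ i j : Fin n, j ≤ i → A i j = 0) :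
    Subgroup.closure {σ : Equiv.Perm (Fin n → ℝ) | ∃ i : Fin n, ∀ x, σ x = sA A i x} ≤
      bottMotionSubgroup A := by
  rw [Subgroup.closure_le]
  rintro σ ⟨i, hσ⟩
  exact ⟨Pi.single i 1, by rw [← sA_eq_bottMotion hAupper]; exact funext hσ⟩

lemma bottSign_eq_one_of_forall_lt_eq_zero (hAupper : ∀ i j : Fin n, j ≤ i → A i j = 0)
    {m : Fin n → ℤ} {j : Fin n} (hm : ∀ i < j, m i = 0) : bottSign A m j = 1 := by
  refine Finset.prod_eq_one fun i _ => ?_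
  rcases lt_or_ge i j with h | h
  · rw [hm i h, mul_zero, Int.negOnePow_zero]
  · rw [hAupper i j h, Nat.cast_zero, zero_mul, Int.negOnePow_zero]

lemma eq_zero_of_bottMotion_apply_eq_self (hAupper : ∀ i j : Fin n, j ≤ i → A i j = 0)
    {m : Fin n → ℤ} {x : Fin n → ℝ} (hx : bottMotion A m x = x) : m = 0 := by
  funext j
  induction j using WellFoundedLT.induction with
  | _ j ih =>
    have hj := congrFun hx j
    rw [bottMotion, bottSign_eq_one_of_forall_lt_eq_zero hAupper ih] at hj
    simpa using hj

end BottMotion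

theorem stmt8_general {n : ℕ} (A : Fin n → Fin n → ℕ)
    (hAupper : ∀ i j : Fin n, j ≤ i → A i j = 0) :
    ∀ σ ∈ Subgroup.closure
        {σ : Equiv.Perm (Fin n → ℝ) | ∃ i : Fin n, ∀ x, σ x = sA A i x},
      σ ≠ 1 → ∀ x : Fin n → ℝ, σ x ≠ x := by
  intro σ hσ hσ_ne x hx
  obtain ⟨m, hm⟩ := closure_sA_le_bottMotionSubgroup hAupper hσ
  have hm_zero : m = 0 := eq_zero_of_bottMotion_apply_eq_self hAupper (hm ▸ hx)
  exact hσ_ne (Equiv.ext fun y => by rw [hm, hm_zero, bottMotion_zero]; rfl)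

/-- Let `A = [a_{ij}]` be a Bott matrix of size `n` (strictly upper triangular with entries
in `{0,1}`) and let `Γ(A)` be the subgroup of bijections of `ℝⁿ` generated by the
Euclidean motions `s₁, …, s_n`.  Then the action of `Γ(A)` on `ℝⁿ` is free: every element
of `Γ(A)` other than the identity has no fixed point in `ℝⁿ`. -/
theorem stmt8 {n : ℕ} (A : Fin n → Fin n → ℕ)
    (hA01 : ∀ i j, A i j ≤ 1) (hAupper : ∀ i j : Fin n, j ≤ i → A i j = 0) :
    ∀ σ ∈ Subgroup.closure
        {σ : Equiv.Perm (Fin n → ℝ) | ∃ i : Fin n, ∀ x, σ x = sA A i x},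
      σ ≠ 1 → ∀ x : Fin n → ℝ, σ x ≠ x :=
  stmt8_general A hAupper
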